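/- For any A ∈ SO(3), the matrix (1/2)(tr(A)I − A) has operator norm at most 1. Equivalently, for all y ∈ ℝ³, ‖(1/2)(tr(A)I − A)y‖ ≤ ‖y‖. -/

import Mathlib

open Matrix
noncomputable section

/-- `SO3 R` : `R` is a rotation matrix. -/
def SO3 (R : Matrix (Fin 3) (Fin 3) ℝ) : Prop := Rᵀ * R = 1 ∧ R.det = 1

/-- Attitude error function `Ψ(R,R_d) = ½ tr(I − R_dᵀ R)`. -/
def Psi (R Rd : Matrix (Fin 3) (Fin 3) ℝ) : ℝ := (1/2) * (1 - Rdᵀ * R).trace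

/-- The hat map identifying `ℝ³` with skew-symmetric matrices. -/
def hat (x : Fin 3 → ℝ) : Matrix (Fin 3) (Fin 3) ℝ :=
  !![0, -x 2, x 1; x 2, 0, -x 0; -x 1, x 0, 0]

/-- The vee map, inverse of the hat map on skew-symmetric matrices. -/
def vee (A : Matrix (Fin 3) (Fin 3) ℝ) : Fin 3 → ℝ := ![A 2 1, A 0 2, A 1 0]

/-- Attitude error vector `e_R = (½ (R_dᵀ R − Rᵀ R_d))ᵛ`. -/
def eR (R Rd : Matrix (Fin 3) (Fin 3) ℝ) : Fin 3 → ℝ :=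
  vee ((1/2 : ℝ) • (Rdᵀ * R - Rᵀ * Rd))

/-- Euclidean dot product on `ℝ³`. -/
def dot (x y : Fin 3 → ℝ) : ℝ := ∑ i, x i * y i

/-- Euclidean norm on `ℝ³`. -/
def enorm (x : Fin 3 → ℝ) : ℝ := Real.sqrt (dot x x)

/-- Cross product on `ℝ³`. -/
def cross (x y : Fin 3 → ℝ) : Fin 3 → ℝ :=
  ![x 1 * y 2 - x 2 * y 1, x 2 * y 0 - x 0 * y 2, x 0 * y 1 - x 1 * y 0]

/-! Write `t = tr A` and `S = A + Aᵀ`. Since `adj A = Aᵀ`, Cayley–Hamilton reads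
`A² = t A - t I + Aᵀ`; comparing traces with `tr (A²) ≤ tr (Aᵀ A) = 3` gives `-1 ≤ t ≤ 3`, and
adding the transposed identity gives `(S - (t - 1) I)(S - 2 I) = 0`. By Cauchy–Schwarz the
quadratic form of such a symmetric `S` lies between `(t - 1)‖y‖²` and `2‖y‖²`. Finally, for
`B = ½ (t I - A)` we have `4 BᵀB = (t² + 1) I - t S`, so
`4‖y‖² - 4‖B y‖² = (t + 1)(yᵀ S y - (t - 1)‖y‖²) + (2‖y‖² - yᵀ S y) ≥ 0`. -/

theorem Matrix.mul_self_fin_three {R : Type*} [CommRing R] (M : Matrix (Fin 3) (Fin 3) R) :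
    M * M = M.trace • M - M.adjugate.trace • 1 + M.adjugate := by
  ext i j
  fin_cases i <;> fin_cases j <;>
    simp [adjugate_fin_three, mul_apply, trace_fin_three, Fin.sum_univ_three] <;> ring

theorem Matrix.trace_mul_self_le_trace_transpose_mul_self {n : Type*} [Fintype n]
    (A : Matrix n n ℝ) : (A * A).trace ≤ (Aᵀ * A).trace := by
  have hsq : 0 ≤ ∑ i, ∑ j, (A i j - A j i) ^ 2 := by positivity
  have hswap : ∑ i, ∑ j, A j i ^ 2 = ∑ i, ∑ j, A i j ^ 2 := Finset.sum_comm
  simp only [sub_sq, Finset.sum_add_distrib, Finset.sum_sub_distrib, hswap] at hsq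
  simp only [trace, diag, mul_apply, transpose_apply, ← sq]
  have hcross : ∑ i, ∑ j, 2 * A i j * A j i = 2 * ∑ i, ∑ j, A i j * A j i := by
    simp only [Finset.mul_sum, mul_assoc]
  rw [Finset.sum_comm (f := fun i j => A j i ^ 2)]
  linarith

theorem Matrix.sq_dotProduct_le {n : Type*} [Fintype n] (u v : n → ℝ) :
    (u ⬝ᵥ v) ^ 2 ≤ (u ⬝ᵥ u) * (v ⬝ᵥ v) := by
  simpa only [dotProduct, sq] using Finset.sum_mul_sq_le_sq_mul_sq Finset.univ u v

theorem Matrix.mulVec_dotProduct_mulVec {m n : Type*} [Fintype m] [Fintype n]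
    (B : Matrix m n ℝ) (x y : n → ℝ) : B *ᵥ x ⬝ᵥ B *ᵥ y = x ⬝ᵥ (Bᵀ * B) *ᵥ y := by
  rw [← vecMul_transpose B x, ← dotProduct_mulVec, mulVec_mulVec]

theorem Matrix.IsSymm.dotProduct_mulVec_mem_Icc {n : Type*} [Fintype n] [DecidableEq n]
    {S : Matrix n n ℝ} (hS : S.IsSymm) {a b : ℝ} (hab : a ≤ b)
    (hSab : (S - a • 1) * (S - b • 1) = 0) (y : n → ℝ) :
    y ⬝ᵥ S *ᵥ y ∈ Set.Icc (a * (y ⬝ᵥ y)) (b * (y ⬝ᵥ y)) := by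
  have hsq : S * S = (a + b) • S - (a * b) • 1 := by
    simp only [sub_mul, mul_sub, smul_mul_assoc, mul_smul_comm, one_mul, mul_one] at hSab
    rw [← sub_eq_zero, ← hSab]
    module
  have hcs := sq_dotProduct_le y (S *ᵥ y)
  rw [mulVec_dotProduct_mulVec, hS.eq, hsq, sub_mulVec, smul_mulVec, smul_mulVec, one_mulVec,
    dotProduct_sub, dotProduct_smul, dotProduct_smul, smul_eq_mul, smul_eq_mul] at hcs
  have hn : 0 ≤ y ⬝ᵥ y := dotProduct_self_star_nonneg y
  set q := y ⬝ᵥ S *ᵥ y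
  set N := y ⬝ᵥ y
  have hroots : (q - a * N) * (q - b * N) ≤ 0 := by linarith
  have hgap : a * N ≤ b * N := mul_le_mul_of_nonneg_right hab hn
  constructor <;> by_contra! h
  · nlinarith [mul_pos (sub_pos.2 h) (sub_pos.2 (h.trans_le hgap))]
  · nlinarith [mul_pos (sub_pos.2 h) (sub_pos.2 (hgap.trans_lt h))]

theorem Matrix.transpose_mul_self_smul_one_sub {n : Type*} [Fintype n] [DecidableEq n]
    {A : Matrix n n ℝ} (hA : Aᵀ * A = 1) (c : ℝ) :
    (c • 1 - A)ᵀ * (c • 1 - A) = (c ^ 2 + 1) • 1 - c • (A + Aᵀ) := by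
  simp only [transpose_sub, transpose_smul, transpose_one, sub_mul, mul_sub, smul_mul_assoc,
    mul_smul_comm, one_mul, mul_one, hA]
  module

namespace SO3

variable {A : Matrix (Fin 3) (Fin 3) ℝ}

theorem mul_transpose (hA : SO3 A) : A * Aᵀ = 1 := mul_eq_one_comm.mp hA.1

theorem adjugate_eq_transpose (hA : SO3 A) : A.adjugate = Aᵀ := by
  calc A.adjugate = (Aᵀ * A) * A.adjugate := by rw [hA.1, one_mul]
    _ = Aᵀ := by rw [Matrix.mul_assoc, mul_adjugate, hA.2, one_smul, mul_one]

theorem mul_self (hA : SO3 A) : A * A = A.trace • A - A.trace • 1 + Aᵀ := by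
  simpa [hA.adjugate_eq_transpose] using A.mul_self_fin_three

theorem trace_mem_Icc (hA : SO3 A) : A.trace ∈ Set.Icc (-1) 3 := by
  have h := A.trace_mul_self_le_trace_transpose_mul_self
  rw [hA.mul_self, hA.1] at h
  simp only [trace_add, trace_sub, trace_smul, trace_one, trace_transpose, Fintype.card_fin,
    Nat.cast_ofNat, smul_eq_mul] at h
  constructor <;> nlinarith

theorem add_transpose_sub_mul_sub_eq_zero (hA : SO3 A) :
    (A + Aᵀ - (A.trace - 1) • 1) * (A + Aᵀ - (2 : ℝ) • 1) = 0 := by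
  have hT : Aᵀ * Aᵀ = A.trace • Aᵀ - A.trace • 1 + A := by
    rw [← transpose_mul, hA.mul_self]
    simp
  simp only [add_mul, mul_add, sub_mul, mul_sub, hA.mul_self, hT, hA.1, hA.mul_transpose,
    smul_mul_assoc, mul_smul_comm, one_mul, mul_one, smul_smul, smul_add, smul_sub]
  module

end SO3

theorem half_trace_sub_opnorm_le_one (A : Matrix (Fin 3) (Fin 3) ℝ)
    (hA : SO3 A) (y : Fin 3 → ℝ) :
    _root_.enorm ((((1/2 : ℝ) • (A.trace • (1 : Matrix (Fin 3) (Fin 3) ℝ) - A)).mulVec y)) ≤ _root_.enorm y := by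
  set t := A.trace
  obtain ⟨ht_low, ht_up⟩ := hA.trace_mem_Icc
  obtain ⟨hS_low, hS_up⟩ := (isSymm_add_transpose_self A).dotProduct_mulVec_mem_Icc
    (by linarith : t - 1 ≤ 2) hA.add_transpose_sub_mul_sub_eq_zero y
  have hB : ((1/2 : ℝ) • (t • 1 - A))ᵀ * ((1/2 : ℝ) • (t • 1 - A)) =
      (1/4 : ℝ) • ((t ^ 2 + 1) • 1 - t • (A + Aᵀ)) := by
    rw [transpose_smul, smul_mul_smul_comm, transpose_mul_self_smul_one_sub hA.1]
    norm_num
  apply Real.sqrt_le_sqrt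
  change _ ⬝ᵥ _ ≤ y ⬝ᵥ y
  rw [mulVec_dotProduct_mulVec, hB, smul_mulVec, sub_mulVec, smul_mulVec, smul_mulVec,
    one_mulVec, dotProduct_smul, dotProduct_sub, dotProduct_smul, dotProduct_smul]
  simp only [smul_eq_mul]
  nlinarith [mul_nonneg (neg_le_iff_add_nonneg.1 ht_low) (sub_nonneg.2 hS_low)]
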